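/- Let φ : ℝ → [0,1] be a Lipschitz continuous function with φ(x) = 0 for x ≤ −2 and φ(x) = 1 for x ≥ −1. For γ ∈ (0,1] define u_γ(x) = φ(x) for x ≤ −1, u_γ(x) = 1 for −1 < x ≤ −γ, u_γ(x) = (1/2)(1 − x/γ) for −γ < x < γ, u_γ(x) = 0 for x ≥ γ; and define u₀(x) = φ(x) for x ≤ −1, u₀(x) = 1 for −1 < x ≤ 0, u₀(x) = 0 for x > 0. Let B u = [u(1−u)]_x denote the distributional derivative of the flux u(1−u) composed with u, so that (Bu_γ)(x) = [φ(x)(1−φ(x))]_x for x ≤ −1, 0 for −1 < x ≤ −γ, −x/(2γ²) for −γ < x < γ, 0 for x ≥ γ, and (Bu₀)(x) = [φ(x)(1−φ(x))]_x for x ≤ −1 and 0 for x > −1. Then for every γ ∈ (0,1] and λ ∈ (0,1]: ‖u_γ − u₀‖_{L¹(ℝ)} = γ/2 and ‖(u_γ + λ B u_γ) − (u₀ + λ B u₀)‖_{L¹(ℝ)} = (γ/2)·(1 + λ²/γ²)/(1 + λ/γ). In particular, taking λ ∈ (0,1/2] and γ = 2λ gives ‖(u_{2λ} + λ B u_{2λ})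 − (u₀ + λ B u₀)‖_{L¹} = (5/6)‖u_{2λ} − u₀‖_{L¹} < ‖u_{2λ} − u₀‖_{L¹}; hence the operator B u = [u(1−u)]_x on L¹(ℝ) is not accretive. -/

import Mathlib

/-! On `x ≤ -1` the profiles `u_γ` and `u₀` coincide together with their fluxes, and off
`(-γ, γ)` the differences vanish as well. On `(-γ, γ)` the resolvent difference
`(u_γ + λ B u_γ) - (u₀ + λ B u₀)` equals `±(1 - c|x|)/2` with `c = (γ + λ)/γ²`: the term
`λ B u_γ` steepens the ramp of `u_γ`, so the difference changes sign inside `(-γ, γ)`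
and its `L¹` norm, an elementary integral of `|x - 1/c|`, drops below that of
`u_γ - u₀` (the case `λ = 0`). -/

open MeasureTheory Set

/-- The family `u_γ` of Example 7.2 (for `γ > 0`). -/
noncomputable def uGamma (φ : ℝ → ℝ) (γ : ℝ) (x : ℝ) : ℝ :=
  if x ≤ -1 then φ x
  else if x ≤ -γ then 1
  else if x < γ then (1 - x / γ) / 2
  else 0

/-- The function `u₀` of Example 7.2 (the case `γ = 0`). -/
noncomputable def uZero (φ : ℝ → ℝ) (x : ℝ) : ℝ :=
  if x ≤ -1 then φ x
  else if x ≤ 0 then 1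
  else 0

/-- `B u_γ = [u_γ(1−u_γ)]_x` computed explicitly. -/
noncomputable def BuGamma (φ : ℝ → ℝ) (γ : ℝ) (x : ℝ) : ℝ :=
  if x ≤ -1 then deriv (fun y => φ y * (1 - φ y)) x
  else if x ≤ -γ then 0
  else if x < γ then -x / (2 * γ^2)
  else 0

/-- `B u₀ = [u₀(1−u₀)]_x` computed explicitly. -/
noncomputable def BuZero (φ : ℝ → ℝ) (x : ℝ) : ℝ :=
  if x ≤ -1 then deriv (fun y => φ y * (1 - φ y)) x
  else 0

theorem intervalIntegral_abs_sub_of_mem {a b m : ℝ} (ham : a ≤ m) (hmb : m ≤ b) :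
    ∫ x in a..b, |x - m| = ((m - a) ^ 2 + (b - m) ^ 2) / 2 := by
  have hcont : Continuous fun x : ℝ => |x - m| := by fun_prop
  have hleft : ∫ x in a..m, |x - m| = ∫ x in a..m, (m - x) := by
    refine intervalIntegral.integral_congr fun x hx => ?_
    rw [uIcc_of_le ham] at hx
    simp only [abs_of_nonpos (sub_nonpos.2 hx.2), neg_sub]
  have hright : ∫ x in m..b, |x - m| = ∫ x in m..b, (x - m) := by
    refine intervalIntegral.integral_congr fun x hx => ?_
    rw [uIcc_of_le hmb] at hx
    simp only [abs_of_nonneg (sub_nonneg.2 hx.1)]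
  rw [← intervalIntegral.integral_add_adjacent_intervals (hcont.intervalIntegrable a m)
    (hcont.intervalIntegrable m b), hleft, hright]
  rw [intervalIntegral.integral_comp_sub_left (fun x => x),
    intervalIntegral.integral_comp_sub_right (fun x => x)]
  simp only [integral_id]
  ring

theorem intervalIntegral_abs_one_sub_mul {b c : ℝ} (hc : 0 < c) (hcb : 1 ≤ c * b) :
    ∫ x in (0 : ℝ)..b, |1 - c * x| = (1 + (c * b - 1) ^ 2) / (2 * c) := by
  have hscale : ∀ x, |1 - c * x| = c * |x - c⁻¹| := fun x => by
    rw [← abs_of_pos hc, ← abs_mul, abs_of_pos hc, abs_sub_comm, mul_sub,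
      mul_inv_cancel₀ hc.ne']
  have hroot : c⁻¹ ≤ b := by rwa [inv_le_iff_one_le_mul₀' hc]
  simp_rw [hscale]
  rw [intervalIntegral.integral_const_mul,
    intervalIntegral_abs_sub_of_mem (inv_nonneg.2 hc.le) hroot]
  field_simp
  ring

theorem abs_resolvent_sub_eq_indicator (φ : ℝ → ℝ) {γ : ℝ} (hγ0 : 0 < γ) (hγ1 : γ ≤ 1)
    (lam x : ℝ) :
    |(uGamma φ γ x + lam * BuGamma φ γ x) - (uZero φ x + lam * BuZero φ x)|
      = (Iio γ).indicator (fun y => |1 - (γ + lam) / γ ^ 2 * y| / 2) |x| := by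
  rcases le_or_gt x (-γ) with hx | hx
  · have hout : |x| ∉ Iio γ := not_lt.2 (le_abs.2 (.inr (by linarith : γ ≤ -x)))
    rw [indicator_of_notMem hout]
    by_cases h1 : x ≤ -1
    · simp [uGamma, uZero, BuGamma, BuZero, h1]
    · have h0 : x ≤ 0 := by linarith
      simp [uGamma, uZero, BuGamma, BuZero, h1, hx, h0]
  have h1 : ¬x ≤ -1 := by linarith
  rcases le_or_gt γ x with hx' | hx'
  · have hout : |x| ∉ Iio γ := not_lt.2 (le_abs.2 (.inl hx'))
    rw [indicator_of_notMem hout]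
    simp [uGamma, uZero, BuGamma, BuZero, h1,
      not_le.2 hx, not_lt.2 hx', not_le.2 (hγ0.trans_le hx')]
  have hin : |x| ∈ Iio γ := abs_lt.2 ⟨hx, hx'⟩
  rw [indicator_of_mem hin]
  simp only [uGamma, uZero, BuGamma, BuZero, if_neg h1, if_neg (not_le.2 hx), if_pos hx']
  conv_rhs => rw [← abs_two, ← abs_div]
  rcases le_or_gt x 0 with h0 | h0
  · rw [if_pos h0, abs_of_nonpos h0, ← abs_neg]
    congr 1
    field_simp
    ring
  · rw [if_neg (not_le.2 h0), abs_of_pos h0]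
    congr 1
    field_simp
    ring

theorem integral_abs_resolvent_sub (φ : ℝ → ℝ) {γ lam : ℝ} (hγ0 : 0 < γ) (hγ1 : γ ≤ 1)
    (hlam : 0 ≤ lam) :
    ∫ x, |(uGamma φ γ x + lam * BuGamma φ γ x) - (uZero φ x + lam * BuZero φ x)|
      = γ / 2 * (1 + lam ^ 2 / γ ^ 2) / (1 + lam / γ) := by
  set c := (γ + lam) / γ ^ 2 with hc_def
  have hc : 0 < c := by positivity
  have hcγ : 1 ≤ c * γ := by
    rw [hc_def, div_mul_eq_mul_div, le_div_iff₀ (by positivity)]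
    nlinarith
  simp_rw [abs_resolvent_sub_eq_indicator φ hγ0 hγ1 lam]
  rw [integral_comp_abs (f := (Iio γ).indicator fun y => |1 - c * y| / 2),
    setIntegral_indicator measurableSet_Iio, Ioi_inter_Iio,
    ← integral_Ioc_eq_integral_Ioo, ← intervalIntegral.integral_of_le hγ0.le,
    intervalIntegral.integral_div,
    intervalIntegral_abs_one_sub_mul hc hcγ, hc_def]
  field_simp
  ring

theorem integral_abs_uGamma_sub_uZero (φ : ℝ → ℝ) {γ : ℝ} (hγ0 : 0 < γ) (hγ1 : γ ≤ 1) :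
    ∫ x, |uGamma φ γ x - uZero φ x| = γ / 2 := by
  simpa using integral_abs_resolvent_sub φ hγ0 hγ1 le_rfl

theorem operator_B_not_accretive_general
    (φ : ℝ → ℝ) :
    (∀ γ ∈ Ioc (0:ℝ) 1, ∀ lam ∈ Ioc (0:ℝ) 1,
      (∫ x, |uGamma φ γ x - uZero φ x|) = γ / 2 ∧
      (∫ x, |(uGamma φ γ x + lam * BuGamma φ γ x) - (uZero φ x + lam * BuZero φ x)|)
        = γ / 2 * (1 + lam^2 / γ^2) / (1 + lam / γ)) ∧
    (∀ lam ∈ Ioc (0:ℝ) (1/2),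
      (∫ x, |(uGamma φ (2*lam) x + lam * BuGamma φ (2*lam) x)
              - (uZero φ x + lam * BuZero φ x)|)
        = 5 / 6 * ∫ x, |uGamma φ (2*lam) x - uZero φ x|) ∧
    (∀ lam ∈ Ioc (0:ℝ) (1/2),
      (∫ x, |(uGamma φ (2*lam) x + lam * BuGamma φ (2*lam) x)
              - (uZero φ x + lam * BuZero φ x)|)
        < ∫ x, |uGamma φ (2*lam) x - uZero φ x|) := by
  have contraction : ∀ lam ∈ Ioc (0:ℝ) (1/2),
      (∫ x, |(uGamma φ (2*lam) x + lam * BuGamma φ (2*lam) x)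
              - (uZero φ x + lam * BuZero φ x)|)
        = 5 / 6 * ∫ x, |uGamma φ (2*lam) x - uZero φ x| := by
    rintro lam ⟨hlam0, hlam1⟩
    rw [integral_abs_resolvent_sub φ (by linarith) (by linarith) hlam0.le,
      integral_abs_uGamma_sub_uZero φ (by linarith) (by linarith)]
    field_simp
    ring
  refine ⟨fun γ ⟨hγ0, hγ1⟩ lam ⟨hlam0, _⟩ =>
    ⟨integral_abs_uGamma_sub_uZero φ hγ0 hγ1,
      integral_abs_resolvent_sub φ hγ0 hγ1 hlam0.le⟩,
    contraction, ?_⟩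
  rintro lam ⟨hlam0, hlam1⟩
  rw [contraction lam ⟨hlam0, hlam1⟩,
    integral_abs_uGamma_sub_uZero φ (by linarith) (by linarith)]
  linarith

/-- Example 7.2: the operator `B u = [u(1−u)]_x` is not accretive on `L¹(ℝ)`:
explicit computation of `‖u_γ − u₀‖_{L¹}` and
`‖(u_γ + λ B u_γ) − (u₀ + λ B u₀)‖_{L¹}`, and the resulting strict decrease for
`γ = 2λ`. -/
theorem operator_B_not_accretive
    (φ : ℝ → ℝ) (hφLip : ∃ K : NNReal, LipschitzWith K φ)
    (hφ01 : ∀ x, φ x ∈ Icc (0:ℝ) 1)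
    (hφ0 : ∀ x ≤ (-2 : ℝ), φ x = 0) (hφ1 : ∀ x : ℝ, -1 ≤ x → φ x = 1) :
    (∀ γ ∈ Ioc (0:ℝ) 1, ∀ lam ∈ Ioc (0:ℝ) 1,
      (∫ x, |uGamma φ γ x - uZero φ x|) = γ / 2 ∧
      (∫ x, |(uGamma φ γ x + lam * BuGamma φ γ x) - (uZero φ x + lam * BuZero φ x)|)
        = γ / 2 * (1 + lam^2 / γ^2) / (1 + lam / γ)) ∧
    (∀ lam ∈ Ioc (0:ℝ) (1/2),
      (∫ x, |(uGamma φ (2*lam) x + lam * BuGamma φ (2*lam) x)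
              - (uZero φ x + lam * BuZero φ x)|)
        = 5 / 6 * ∫ x, |uGamma φ (2*lam) x - uZero φ x|) ∧
    (∀ lam ∈ Ioc (0:ℝ) (1/2),
      (∫ x, |(uGamma φ (2*lam) x + lam * BuGamma φ (2*lam) x)
              - (uZero φ x + lam * BuZero φ x)|)
        < ∫ x, |uGamma φ (2*lam) x - uZero φ x|) :=
  operator_B_not_accretive_general φ
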